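/- arXiv:1711.00195 — 2 statements merged into one kernel-verified Lean document; each statement's English description precedes it below -/
import Mathlib

section
/- Let a₁ > 0 and a₂ ∈ ℝ, and let f : (0,1]×(0,1] → ℝ be measurable with I := ∫₀¹∫₀¹ ρ₁^{−2a₁} ρ₂^{−2a₂} |f(ρ₁,ρ₂)|² (dρ₁/ρ₁)(dρ₂/ρ₂) < ∞. Then for almost every ρ₂ ∈ (0,1] the integral c(ρ₂) := ∫₀¹ f(s,ρ₂) ds/s converges absolutely; c satisfies ∫₀¹ ρ₂^{−2a₂} |c(ρ₂)|² dρ₂/ρ₂ ≤ (2a₁)^{−1} I; and u(ρ₁,ρ₂) := ∫_{ρ₁}¹ f(s,ρ₂) ds/s satisfies ∫₀¹∫₀¹ ρ₁^{−2a₁} ρ₂^{−2a₂} |u(ρ₁,ρ₂) − c(ρ₂)|² (dρ₁/ρ₁)(dρ₂/ρ₂) ≤ a₁^{−2} I. -/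
/-! Cauchy–Schwarz against the weight `s ^ (b - 1)` gives
`(∫₀^ρ |g| ds/s)² ≤ (ρ^b / b) ∫₀^ρ s^(-b) g² ds/s`. With `b = 2a₁`, `ρ = 1` this bounds the
leading term `c`. Since `u - c = -∫₀^ρ₁ f ds/s`, taking `b = a₁` and exchanging the order of
integration over the triangle `s ≤ ρ₁ ≤ 1` gives Hardy's inequality with constant `a₁⁻²`. The
weight in `ρ₂` factors out, so all estimates are made slice by slice for `ℝ≥0∞`-valued integrals,
and integrability follows from the finiteness of these bounds. -/

open MeasureTheory Set Function
open scoped ENNReal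

theorem sq_lintegral_mul_le {α : Type*} [MeasurableSpace α] {μ : Measure α} {F G : α → ℝ≥0∞}
    (hF : AEMeasurable F μ) (hG : AEMeasurable G μ) :
    (∫⁻ x, F x * G x ∂μ) ^ 2 ≤ (∫⁻ x, F x ^ 2 ∂μ) * ∫⁻ x, G x ^ 2 ∂μ := by
  have hHolder :=
    ENNReal.lintegral_mul_le_Lp_mul_Lq μ Real.HolderConjugate.two_two hF hG
  simp only [Pi.mul_apply, ENNReal.rpow_two, one_div] at hHolder
  calc _ ≤ ((∫⁻ x, F x ^ 2 ∂μ) ^ (2⁻¹ : ℝ) * (∫⁻ x, G x ^ 2 ∂μ) ^ (2⁻¹ : ℝ)) ^ 2 := by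
        gcongr
    _ = _ := by
        have hsqrt (x : ℝ≥0∞) : (x ^ (2⁻¹ : ℝ)) ^ 2 = x := by
          simpa using ENNReal.rpow_inv_natCast_pow two_ne_zero x
        rw [mul_pow, hsqrt, hsqrt]

theorem ofReal_sq_integral_le_sq_lintegral_enorm {α : Type*} [MeasurableSpace α] {μ : Measure α}
    (g : α → ℝ) : ENNReal.ofReal ((∫ x, g x ∂μ) ^ 2) ≤ (∫⁻ x, ‖g x‖ₑ ∂μ) ^ 2 := by
  rw [← sq_abs, ENNReal.ofReal_pow (abs_nonneg _), ← Real.enorm_eq_ofReal_abs]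
  gcongr
  exact enorm_integral_le_lintegral_enorm g

theorem lintegral_Ioc_rpow_sub_one {b ρ : ℝ} (hb : 0 < b) (hρ : 0 ≤ ρ) :
    ∫⁻ s in Ioc 0 ρ, ENNReal.ofReal (s ^ (b - 1)) = ENNReal.ofReal (ρ ^ b / b) := by
  have hint : IntervalIntegrable (fun s : ℝ => s ^ (b - 1)) volume 0 ρ :=
    intervalIntegral.intervalIntegrable_rpow' (by linarith)
  rw [← ofReal_integral_eq_lintegral_ofReal hint.1
      ((ae_restrict_iff' measurableSet_Ioc).2
        (ae_of_all _ fun s hs => Real.rpow_nonneg hs.1.le _)),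
    ← intervalIntegral.integral_of_le hρ, integral_rpow (Or.inl (by linarith)),
    Real.zero_rpow (by linarith)]
  simp

theorem lintegral_Ioi_rpow_neg_sub_one {a s : ℝ} (ha : 0 < a) (hs : 0 < s) :
    ∫⁻ ρ in Ioi s, ENNReal.ofReal (ρ ^ (-a - 1)) = ENNReal.ofReal (s ^ (-a) / a) := by
  rw [← ofReal_integral_eq_lintegral_ofReal (integrableOn_Ioi_rpow_of_lt (by linarith) hs)
      ((ae_restrict_iff' measurableSet_Ioi).2
        (ae_of_all _ fun ρ hρ => Real.rpow_nonneg (hs.trans hρ).le _)),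
    integral_Ioi_rpow_of_lt (by linarith) hs]
  congr 1
  rw [show -a - 1 + 1 = -a by ring, div_neg, neg_div, neg_neg]

theorem sq_lintegral_Ioc_enorm_div_le {g : ℝ → ℝ} (hg : Measurable g) {b ρ : ℝ} (hb : 0 < b)
    (hρ : 0 ≤ ρ) :
    (∫⁻ s in Ioc 0 ρ, ‖g s / s‖ₑ) ^ 2 ≤
      ENNReal.ofReal (ρ ^ b / b) * ∫⁻ s in Ioc 0 ρ, ENNReal.ofReal (s ^ (-b) * g s ^ 2 / s) := by
  have hsplit : ∀ s ∈ Ioc 0 ρ, ‖g s / s‖ₑ =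
      ENNReal.ofReal (s ^ ((b - 1) / 2)) * ENNReal.ofReal (s ^ (-(b + 1) / 2) * |g s|) := by
    intro s hs
    rw [← ENNReal.ofReal_mul (Real.rpow_nonneg hs.1.le _), ← mul_assoc, ← Real.rpow_add hs.1,
      show (b - 1) / 2 + -(b + 1) / 2 = -1 by ring, Real.rpow_neg_one, Real.enorm_eq_ofReal_abs,
      abs_div, abs_of_pos hs.1, inv_mul_eq_div]
  have hF : ∀ s ∈ Ioc 0 ρ,
      ENNReal.ofReal (s ^ ((b - 1) / 2)) ^ 2 = ENNReal.ofReal (s ^ (b - 1)) := by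
    intro s hs
    rw [← ENNReal.ofReal_pow (Real.rpow_nonneg hs.1.le _), ← Real.rpow_mul_natCast hs.1.le]
    norm_num
  have hG : ∀ s ∈ Ioc 0 ρ, ENNReal.ofReal (s ^ (-(b + 1) / 2) * |g s|) ^ 2 =
      ENNReal.ofReal (s ^ (-b) * g s ^ 2 / s) := by
    intro s hs
    rw [← ENNReal.ofReal_pow (mul_nonneg (Real.rpow_nonneg hs.1.le _) (abs_nonneg _)), mul_pow,
      sq_abs, ← Real.rpow_mul_natCast hs.1.le,
      show -(b + 1) / 2 * ((2 : ℕ) : ℝ) = -b + -1 by push_cast; ring, Real.rpow_add hs.1,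
      Real.rpow_neg_one]
    ring_nf
  rw [setLIntegral_congr_fun measurableSet_Ioc hsplit, ← lintegral_Ioc_rpow_sub_one hb hρ,
    ← setLIntegral_congr_fun measurableSet_Ioc hF, ← setLIntegral_congr_fun measurableSet_Ioc hG]
  exact sq_lintegral_mul_le (by fun_prop) (by fun_prop)

theorem lintegral_Ioc_lintegral_Ioc_le {K : ℝ → ℝ → ℝ≥0∞} (hK : Measurable (uncurry K))
    (R : ℝ) :
    ∫⁻ ρ in Ioc 0 R, ∫⁻ s in Ioc 0 ρ, K ρ s ≤ ∫⁻ s in Ioc 0 R, ∫⁻ ρ in Ici s, K ρ s := by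
  set k : ℝ → ℝ → ℝ≥0∞ := fun ρ s => (Ioc 0 ρ).indicator (K ρ) s
  have hk : Measurable (uncurry k) := by
    have : uncurry k = {p : ℝ × ℝ | 0 < p.2 ∧ p.2 ≤ p.1}.indicator (uncurry K) := by
      ext ⟨ρ, s⟩; simp [k, indicator_apply]
    rw [this]
    exact hK.indicator ((measurableSet_lt measurable_const measurable_snd).inter
      (measurableSet_le measurable_snd measurable_fst))
  calc ∫⁻ ρ in Ioc 0 R, ∫⁻ s in Ioc 0 ρ, K ρ s = ∫⁻ ρ in Ioc 0 R, ∫⁻ s in Ioc 0 R, k ρ s := by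
        refine setLIntegral_congr_fun measurableSet_Ioc fun ρ hρ => ?_
        rw [lintegral_indicator measurableSet_Ioc,
          Measure.restrict_restrict_of_subset (Ioc_subset_Ioc_right hρ.2)]
    _ = ∫⁻ s in Ioc 0 R, ∫⁻ ρ in Ioc 0 R, k ρ s := lintegral_lintegral_swap hk.aemeasurable
    _ ≤ ∫⁻ s in Ioc 0 R, ∫⁻ ρ, k ρ s := by gcongr; exact Measure.restrict_le_self
    _ = ∫⁻ s in Ioc 0 R, ∫⁻ ρ in Ici s, K ρ s := by
        refine setLIntegral_congr_fun measurableSet_Ioc fun s hs => ?_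
        rw [← lintegral_indicator measurableSet_Ici]
        congr 1 with ρ
        simp [k, indicator_apply, hs.1]

theorem ofReal_rpow_mul_sq_setIntegral_Ioc_div_le {g : ℝ → ℝ} (hg : Measurable g) {a ρ : ℝ}
    (ha : 0 < a) (hρ : 0 < ρ) :
    ENNReal.ofReal (ρ ^ (-(2 * a)) * (∫ s in Ioc 0 ρ, g s / s) ^ 2 / ρ) ≤
      ENNReal.ofReal (a⁻¹ * ρ ^ (-a - 1)) *
        ∫⁻ s in Ioc 0 ρ, ENNReal.ofReal (s ^ (-a) * g s ^ 2 / s) := by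
  have hweight : ENNReal.ofReal (ρ ^ (-(2 * a)) / ρ) * ENNReal.ofReal (ρ ^ a / a) =
      ENNReal.ofReal (a⁻¹ * ρ ^ (-a - 1)) := by
    rw [← ENNReal.ofReal_mul (div_nonneg (Real.rpow_nonneg hρ.le _) hρ.le)]
    congr 1
    rw [Real.rpow_sub_one hρ.ne', Real.rpow_neg hρ.le, Real.rpow_neg hρ.le,
      show 2 * a = a + a by ring, Real.rpow_add hρ]
    field_simp
  calc ENNReal.ofReal (ρ ^ (-(2 * a)) * (∫ s in Ioc 0 ρ, g s / s) ^ 2 / ρ)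
      = ENNReal.ofReal (ρ ^ (-(2 * a)) / ρ) * ENNReal.ofReal ((∫ s in Ioc 0 ρ, g s / s) ^ 2) := by
        rw [← ENNReal.ofReal_mul (div_nonneg (Real.rpow_nonneg hρ.le _) hρ.le),
          mul_div_right_comm]
    _ ≤ ENNReal.ofReal (ρ ^ (-(2 * a)) / ρ) * (ENNReal.ofReal (ρ ^ a / a) *
          ∫⁻ s in Ioc 0 ρ, ENNReal.ofReal (s ^ (-a) * g s ^ 2 / s)) := by
        gcongr
        exact (ofReal_sq_integral_le_sq_lintegral_enorm _).trans
          (sq_lintegral_Ioc_enorm_div_le hg ha hρ.le)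
    _ = _ := by rw [← mul_assoc, hweight]

theorem lintegral_Ioc_hardy {g : ℝ → ℝ} (hg : Measurable g) {a R : ℝ} (ha : 0 < a) :
    ∫⁻ ρ in Ioc 0 R, ENNReal.ofReal (ρ ^ (-(2 * a)) * (∫ s in Ioc 0 ρ, g s / s) ^ 2 / ρ) ≤
      ENNReal.ofReal (a⁻¹ ^ 2) *
        ∫⁻ s in Ioc 0 R, ENNReal.ofReal (s ^ (-(2 * a)) * g s ^ 2 / s) := by
  set ψ : ℝ → ℝ≥0∞ := fun s => ENNReal.ofReal (s ^ (-a) * g s ^ 2 / s)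
  have hpoint : ∀ ρ ∈ Ioc 0 R,
      ENNReal.ofReal (ρ ^ (-(2 * a)) * (∫ s in Ioc 0 ρ, g s / s) ^ 2 / ρ) ≤
        ∫⁻ s in Ioc 0 ρ, ENNReal.ofReal (a⁻¹ * ρ ^ (-a - 1)) * ψ s := fun ρ hρ => by
    rw [lintegral_const_mul' _ _ ENNReal.ofReal_ne_top]
    exact ofReal_rpow_mul_sq_setIntegral_Ioc_div_le hg ha hρ.1
  have htail : ∀ s ∈ Ioc 0 R,
      ∫⁻ ρ in Ici s, ENNReal.ofReal (a⁻¹ * ρ ^ (-a - 1)) * ψ s =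
        ENNReal.ofReal (a⁻¹ ^ 2) * ENNReal.ofReal (s ^ (-(2 * a)) * g s ^ 2 / s) := by
    intro s hs
    simp_rw [ENNReal.ofReal_mul (inv_nonneg.2 ha.le)]
    rw [lintegral_mul_const' _ _ ENNReal.ofReal_ne_top,
      lintegral_const_mul' _ _ ENNReal.ofReal_ne_top,
      setLIntegral_congr Ioi_ae_eq_Ici.symm, lintegral_Ioi_rpow_neg_sub_one ha hs.1,
      ← ENNReal.ofReal_mul (inv_nonneg.2 ha.le),
      ← ENNReal.ofReal_mul (by have := Real.rpow_nonneg hs.1.le (-a); positivity),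
      ← ENNReal.ofReal_mul (sq_nonneg a⁻¹), show -(2 * a) = -a + -a by ring, Real.rpow_add hs.1]
    ring_nf
  calc _ ≤ ∫⁻ ρ in Ioc 0 R, ∫⁻ s in Ioc 0 ρ, ENNReal.ofReal (a⁻¹ * ρ ^ (-a - 1)) * ψ s :=
        setLIntegral_mono' measurableSet_Ioc hpoint
    _ ≤ ∫⁻ s in Ioc 0 R, ∫⁻ ρ in Ici s, ENNReal.ofReal (a⁻¹ * ρ ^ (-a - 1)) * ψ s :=
        lintegral_Ioc_lintegral_Ioc_le (by fun_prop) R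
    _ = _ := by
        rw [setLIntegral_congr_fun measurableSet_Ioc htail,
          lintegral_const_mul' _ _ ENNReal.ofReal_ne_top]

theorem integrableOn_Ioc_div_of_lintegral_ne_top {g : ℝ → ℝ} (hg : Measurable g) {b ρ : ℝ}
    (hb : 0 < b) (hρ : 0 ≤ ρ)
    (h : ∫⁻ s in Ioc 0 ρ, ENNReal.ofReal (s ^ (-b) * g s ^ 2 / s) ≠ ∞) :
    IntegrableOn (fun s => g s / s) (Ioc 0 ρ) := by
  refine ⟨(hg.div measurable_id).aestronglyMeasurable, ?_⟩
  have hsq := (sq_lintegral_Ioc_enorm_div_le hg hb hρ).trans_lt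
    (ENNReal.mul_lt_top ENNReal.ofReal_lt_top h.lt_top)
  simpa [HasFiniteIntegral] using hsq

theorem setIntegral_Ioc_sub_setIntegral_Ioc {g : ℝ → ℝ} {a x b : ℝ} (hg : IntegrableOn g (Ioc a b))
    (hax : a ≤ x) (hxb : x ≤ b) :
    (∫ s in Ioc x b, g s) - ∫ s in Ioc a b, g s = -∫ s in Ioc a x, g s := by
  rw [← Ioc_union_Ioc_eq_Ioc hax hxb, setIntegral_union (Ioc_disjoint_Ioc_of_le le_rfl)
    measurableSet_Ioc (hg.mono_set (Ioc_subset_Ioc_right hxb))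
    (hg.mono_set (Ioc_subset_Ioc_left hax))]
  ring

theorem measurable_setIntegral_Ioc {β : Type*} [MeasurableSpace β] {k : ℝ → β → ℝ}
    (hk : Measurable (uncurry k)) (b : ℝ) :
    Measurable fun p : ℝ × β => ∫ s in Ioc p.1 b, k s p.2 := by
  have hind :
      Measurable (uncurry fun (p : ℝ × β) (s : ℝ) => (Ioc p.1 b).indicator (k · p.2) s) := by
    have : (uncurry fun (p : ℝ × β) (s : ℝ) => (Ioc p.1 b).indicator (k · p.2) s) =
        {q : (ℝ × β) × ℝ | q.1.1 < q.2 ∧ q.2 ≤ b}.indicator fun q => k q.2 q.1.2 := by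
      ext ⟨p, s⟩; simp [indicator_apply]
    rw [this]
    exact (hk.comp (measurable_snd.prodMk (measurable_snd.comp measurable_fst))).indicator
      ((measurableSet_lt (measurable_fst.comp measurable_fst) measurable_snd).inter
        (measurableSet_le measurable_snd measurable_const))
  simp_rw [← integral_indicator measurableSet_Ioc]
  exact (hind.stronglyMeasurable.integral_prod_right (ν := volume)).measurable

theorem setLIntegral_prod_ofReal_rpow_mul_rpow {s t : Set ℝ} (ht : MeasurableSet t)
    (ht₀ : t ⊆ Ioi 0) {T : ℝ → ℝ → ℝ} (hT : Measurable (uncurry T)) (α β : ℝ) :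
    ∫⁻ p in s ×ˢ t, ENNReal.ofReal (p.1 ^ α * p.2 ^ β * T p.1 p.2 / (p.1 * p.2)) =
      ∫⁻ y in t, ENNReal.ofReal (y ^ β / y) * ∫⁻ x in s, ENNReal.ofReal (x ^ α * T x y / x) := by
  rw [Measure.volume_eq_prod, setLIntegral_prod_symm _ (by fun_prop)]
  refine setLIntegral_congr_fun ht fun y hy => ?_
  rw [← lintegral_const_mul' _ _ ENNReal.ofReal_ne_top]
  congr 1 with x
  rw [← ENNReal.ofReal_mul (div_nonneg (Real.rpow_nonneg (ht₀ hy).le _) (ht₀ hy).le)]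
  congr 1
  field_simp

theorem integrable_and_integral_le_of_lintegral_ofReal_le {α : Type*} [MeasurableSpace α]
    {μ : Measure α} {φ : α → ℝ} {r : ℝ} (hφm : AEStronglyMeasurable φ μ) (hφ : 0 ≤ᵐ[μ] φ)
    (hr : 0 ≤ r) (h : ∫⁻ x, ENNReal.ofReal (φ x) ∂μ ≤ ENNReal.ofReal r) :
    Integrable φ μ ∧ ∫ x, φ x ∂μ ≤ r :=
  ⟨⟨hφm, (hasFiniteIntegral_iff_ofReal hφ).2 (h.trans_lt ENNReal.ofReal_lt_top)⟩, by
    rw [integral_eq_lintegral_of_nonneg_ae hφ hφm]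
    exact ENNReal.toReal_le_of_le_ofReal hr h⟩

section Corner

variable {a₁ a₂ : ℝ} {f : ℝ → ℝ → ℝ}

theorem measurable_leadingTerm (hf : Measurable (uncurry f)) :
    Measurable fun y => ∫ s in Ioc 0 1, f s y / s :=
  (measurable_setIntegral_Ioc (k := fun s y => f s y / s) (hf.div measurable_fst) 1).comp
    (measurable_const.prodMk measurable_id)

theorem measurable_remainder (hf : Measurable (uncurry f)) :
    Measurable fun p : ℝ × ℝ => (∫ s in Ioc p.1 1, f s p.2 / s) - ∫ s in Ioc 0 1, f s p.2 / s :=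
  (measurable_setIntegral_Ioc (k := fun s y => f s y / s) (hf.div measurable_fst) 1).sub
    ((measurable_leadingTerm hf).comp measurable_snd)

theorem ae_integrableOn_Ioc_div (ha₁ : 0 < a₁) (hf : Measurable (uncurry f))
    (hI : ∫⁻ p in Ioc 0 1 ×ˢ Ioc 0 1,
      ENNReal.ofReal (p.1 ^ (-(2 * a₁)) * p.2 ^ (-(2 * a₂)) * f p.1 p.2 ^ 2 / (p.1 * p.2)) ≠ ∞) :
    ∀ᵐ y ∂(volume.restrict (Ioc 0 1)), IntegrableOn (fun s => f s y / s) (Ioc 0 1) := by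
  rw [setLIntegral_prod_ofReal_rpow_mul_rpow measurableSet_Ioc (fun y hy => hy.1)
    (T := fun x y => f x y ^ 2) (hf.pow_const 2)] at hI
  filter_upwards [ae_lt_top' (by fun_prop) hI, ae_restrict_mem measurableSet_Ioc] with y hy hy₀
  refine integrableOn_Ioc_div_of_lintegral_ne_top hf.of_uncurry_right (b := 2 * a₁) (by linarith)
    zero_le_one ?_
  exact (ENNReal.lt_top_of_mul_ne_top_right hy.ne
    (ENNReal.ofReal_pos.2 (div_pos (Real.rpow_pos_of_pos hy₀.1 _) hy₀.1)).ne').ne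

theorem lintegral_leadingTerm_le (ha₁ : 0 < a₁) (hf : Measurable (uncurry f)) :
    ∫⁻ y in Ioc 0 1, ENNReal.ofReal (y ^ (-(2 * a₂)) * (∫ s in Ioc 0 1, f s y / s) ^ 2 / y) ≤
      ENNReal.ofReal (2 * a₁)⁻¹ * ∫⁻ p in Ioc 0 1 ×ˢ Ioc 0 1,
        ENNReal.ofReal (p.1 ^ (-(2 * a₁)) * p.2 ^ (-(2 * a₂)) * f p.1 p.2 ^ 2 / (p.1 * p.2)) := by
  rw [setLIntegral_prod_ofReal_rpow_mul_rpow measurableSet_Ioc (fun y hy => hy.1)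
      (T := fun x y => f x y ^ 2) (hf.pow_const 2),
    ← lintegral_const_mul' _ _ ENNReal.ofReal_ne_top]
  refine setLIntegral_mono' measurableSet_Ioc fun y hy => ?_
  calc ENNReal.ofReal (y ^ (-(2 * a₂)) * (∫ s in Ioc 0 1, f s y / s) ^ 2 / y)
      = ENNReal.ofReal (y ^ (-(2 * a₂)) / y) *
          ENNReal.ofReal ((∫ s in Ioc 0 1, f s y / s) ^ 2) := by
        rw [← ENNReal.ofReal_mul (div_nonneg (Real.rpow_nonneg hy.1.le _) hy.1.le),
          mul_div_right_comm]
    _ ≤ ENNReal.ofReal (y ^ (-(2 * a₂)) / y) * (ENNReal.ofReal (1 ^ (2 * a₁) / (2 * a₁)) *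
          ∫⁻ x in Ioc 0 1, ENNReal.ofReal (x ^ (-(2 * a₁)) * f x y ^ 2 / x)) := by
        gcongr
        exact (ofReal_sq_integral_le_sq_lintegral_enorm _).trans
          (sq_lintegral_Ioc_enorm_div_le hf.of_uncurry_right (by linarith) zero_le_one)
    _ = _ := by rw [Real.one_rpow, one_div, mul_left_comm]

theorem lintegral_remainder_le (ha₁ : 0 < a₁) (hf : Measurable (uncurry f))
    (hslice : ∀ᵐ y ∂(volume.restrict (Ioc 0 1)), IntegrableOn (fun s => f s y / s) (Ioc 0 1)) :
    ∫⁻ p in Ioc 0 1 ×ˢ Ioc 0 1, ENNReal.ofReal (p.1 ^ (-(2 * a₁)) * p.2 ^ (-(2 * a₂)) *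
        ((∫ s in Ioc p.1 1, f s p.2 / s) - ∫ s in Ioc 0 1, f s p.2 / s) ^ 2 / (p.1 * p.2)) ≤
      ENNReal.ofReal (a₁⁻¹ ^ 2) * ∫⁻ p in Ioc 0 1 ×ˢ Ioc 0 1,
        ENNReal.ofReal (p.1 ^ (-(2 * a₁)) * p.2 ^ (-(2 * a₂)) * f p.1 p.2 ^ 2 / (p.1 * p.2)) := by
  rw [setLIntegral_prod_ofReal_rpow_mul_rpow measurableSet_Ioc (fun y hy => hy.1)
      (T := fun x y => ((∫ s in Ioc x 1, f s y / s) - ∫ s in Ioc 0 1, f s y / s) ^ 2)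
      ((measurable_remainder hf).pow_const 2),
    setLIntegral_prod_ofReal_rpow_mul_rpow measurableSet_Ioc (fun y hy => hy.1)
      (T := fun x y => f x y ^ 2) (hf.pow_const 2),
    ← lintegral_const_mul' _ _ ENNReal.ofReal_ne_top]
  refine lintegral_mono_ae ?_
  filter_upwards [hslice] with y hy
  have hu_sub_c : ∀ x ∈ Ioc (0 : ℝ) 1, ((∫ s in Ioc x 1, f s y / s) - ∫ s in Ioc 0 1, f s y / s) ^ 2
      = (∫ s in Ioc 0 x, f s y / s) ^ 2 := by
    intro x hx
    rw [setIntegral_Ioc_sub_setIntegral_Ioc hy hx.1.le hx.2, neg_sq]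
  rw [setLIntegral_congr_fun measurableSet_Ioc fun x hx => by rw [hu_sub_c x hx], mul_left_comm]
  gcongr
  exact lintegral_Ioc_hardy hf.of_uncurry_right ha₁

end Corner

/-- Two-variable version of the weighted ODE lemma at a corner: for weights `a₁ > 0`, `a₂ ∈ ℝ`
and `f` with finite weighted norm `I` on `(0,1]²`, the solution
`u(ρ₁,ρ₂) = ∫_{ρ₁}¹ f(s,ρ₂) ds/s` of `ρ₁ ∂_{ρ₁} u = -f` has a leading term
`c(ρ₂) = ∫₀¹ f(s,ρ₂) ds/s` (defined by an a.e. absolutely convergent integral) with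
`∫₀¹ ρ₂^{-2a₂} |c|² dρ₂/ρ₂ ≤ (2a₁)⁻¹ I`, and
`∫∫ ρ₁^{-2a₁} ρ₂^{-2a₂} |u - c|² (dρ₁/ρ₁)(dρ₂/ρ₂) ≤ a₁⁻² I`. -/
theorem weighted_ode_corner_leading_term (a₁ a₂ : ℝ) (ha₁ : 0 < a₁)
    (f : ℝ → ℝ → ℝ) (hf : Measurable (Function.uncurry f))
    (hI : IntegrableOn
      (fun p : ℝ × ℝ =>
        p.1 ^ (-(2 * a₁)) * p.2 ^ (-(2 * a₂)) * (f p.1 p.2) ^ 2 / (p.1 * p.2))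
      (Ioc 0 1 ×ˢ Ioc 0 1)) :
    (∀ᵐ ρ₂ ∂(volume.restrict (Ioc (0 : ℝ) 1)),
      IntegrableOn (fun s => f s ρ₂ / s) (Ioc (0 : ℝ) 1)) ∧
    IntegrableOn
      (fun ρ₂ => ρ₂ ^ (-(2 * a₂)) * (∫ s in Ioc (0 : ℝ) 1, f s ρ₂ / s) ^ 2 / ρ₂)
      (Ioc (0 : ℝ) 1) ∧
    (∫ ρ₂ in Ioc (0 : ℝ) 1, ρ₂ ^ (-(2 * a₂)) * (∫ s in Ioc (0 : ℝ) 1, f s ρ₂ / s) ^ 2 / ρ₂) ≤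
      (2 * a₁)⁻¹ *
        (∫ p in (Ioc (0 : ℝ) 1 ×ˢ Ioc (0 : ℝ) 1),
          p.1 ^ (-(2 * a₁)) * p.2 ^ (-(2 * a₂)) * (f p.1 p.2) ^ 2 / (p.1 * p.2)) ∧
    IntegrableOn
      (fun p : ℝ × ℝ =>
        p.1 ^ (-(2 * a₁)) * p.2 ^ (-(2 * a₂)) *
          ((∫ s in Ioc p.1 1, f s p.2 / s) - ∫ s in Ioc (0 : ℝ) 1, f s p.2 / s) ^ 2
          / (p.1 * p.2))
      (Ioc 0 1 ×ˢ Ioc 0 1) ∧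
    (∫ p in (Ioc (0 : ℝ) 1 ×ˢ Ioc (0 : ℝ) 1),
        p.1 ^ (-(2 * a₁)) * p.2 ^ (-(2 * a₂)) *
          ((∫ s in Ioc p.1 1, f s p.2 / s) - ∫ s in Ioc (0 : ℝ) 1, f s p.2 / s) ^ 2
          / (p.1 * p.2)) ≤
      a₁⁻¹ ^ 2 *
        (∫ p in (Ioc (0 : ℝ) 1 ×ˢ Ioc (0 : ℝ) 1),
          p.1 ^ (-(2 * a₁)) * p.2 ^ (-(2 * a₂)) * (f p.1 p.2) ^ 2 / (p.1 * p.2)) := by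
  have hF₀ : 0 ≤ᵐ[volume.restrict (Ioc 0 1 ×ˢ Ioc 0 1)] fun p : ℝ × ℝ =>
      p.1 ^ (-(2 * a₁)) * p.2 ^ (-(2 * a₂)) * (f p.1 p.2) ^ 2 / (p.1 * p.2) := by
    filter_upwards [ae_restrict_mem (measurableSet_Ioc.prod measurableSet_Ioc)] with p hp
    have := hp.1.1; have := hp.2.1
    positivity
  have hI' := ofReal_integral_eq_lintegral_ofReal hI hF₀
  have hI₀ := integral_nonneg_of_ae hF₀
  have hslice := ae_integrableOn_Ioc_div ha₁ hf (hI' ▸ ENNReal.ofReal_ne_top)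
  have hc := measurable_leadingTerm hf
  have hR := measurable_remainder hf
  refine ⟨hslice, and_assoc.1
    ⟨integrable_and_integral_le_of_lintegral_ofReal_le
        (Measurable.aestronglyMeasurable (by fun_prop)) ?_ (by positivity) ?_,
      integrable_and_integral_le_of_lintegral_ofReal_le
        (Measurable.aestronglyMeasurable (by fun_prop)) ?_ (by positivity) ?_⟩⟩
  · filter_upwards [ae_restrict_mem measurableSet_Ioc] with y hy
    have := hy.1
    positivity
  · rw [ENNReal.ofReal_mul (by positivity), hI']
    exact lintegral_leadingTerm_le ha₁ hf
  · filter_upwards [ae_restrict_mem (measurableSet_Ioc.prod measurableSet_Ioc)] with p hp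
    have := hp.1.1; have := hp.2.1
    positivity
  · rw [ENNReal.ofReal_mul (by positivity), hI']
    exact lintegral_remainder_le ha₁ hf hslice
end

section
/- In the recursion described in the context, take E₀ = ∅. Then the unions E'_I, Ē_I, E_I of the recursively defined sets are given explicitly by: E'_I = {(−im, j) : m ∈ ℕ, m ≥ 1, 0 ≤ j ≤ 3m−1}; Ē_I = {(0,0)} ∪ E'_I; and E_I = {(−im, j) : m ∈ ℕ, m ≥ 0, 0 ≤ j ≤ 3m+1}. -/
/-- The extended union `E₁ ∪̄ E₂`. -/
def extUnion (E₁ E₂ : Set (ℂ × ℕ)) : Set (ℂ × ℕ) :=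
  E₁ ∪ E₂ ∪
    {p : ℂ × ℕ | ∃ j₁ j₂ : ℕ, (p.1, j₁) ∈ E₁ ∧ (p.1, j₂) ∈ E₂ ∧ p.2 ≤ j₁ + j₂ + 1}

/-- The sum `E₁ + E₂ = {(z₁+z₂, j₁+j₂)}`. -/
def idxSum (E₁ E₂ : Set (ℂ × ℕ)) : Set (ℂ × ℕ) :=
  {p : ℂ × ℕ | ∃ z₁ : ℂ, ∃ j₁ : ℕ, ∃ z₂ : ℂ, ∃ j₂ : ℕ,
    (z₁, j₁) ∈ E₁ ∧ (z₂, j₂) ∈ E₂ ∧ p = (z₁ + z₂, j₁ + j₂)}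

/-- `idxSMul j E` is the `j`-fold sum `E + ⋯ + E` (for `j ≥ 1`). -/
def idxSMul : ℕ → Set (ℂ × ℕ) → Set (ℂ × ℕ)
  | 0, _ => {((0 : ℂ), (0 : ℕ))}
  | n + 1, E => idxSum E (idxSMul n E)

/-- `E - i = {(z - i, j) : (z,j) ∈ E}`. -/
def idxMinusI (E : Set (ℂ × ℕ)) : Set (ℂ × ℕ) :=
  (fun p : ℂ × ℕ => (p.1 - Complex.I, p.2)) '' E

/-- `F + i = {(z + i, j) : (z,j) ∈ F}`. -/
def idxPlusI (E : Set (ℂ × ℕ)) : Set (ℂ × ℕ) :=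
  (fun p : ℂ × ℕ => (p.1 + Complex.I, p.2)) '' E

/-- The index set denoted `0`, i.e. `{(-i n, 0) : n ∈ ℕ}`. -/
def idxZero : Set (ℂ × ℕ) :=
  {p : ℂ × ℕ | ∃ n : ℕ, p = (-(n : ℂ) * Complex.I, 0)}

/-- The recursion producing the index sets at null infinity: the value at `k` is the triple
`(E'_{I,k}, Ē_{I,k}, E_{I,k})`. -/
def scriRec (E₀ : Set (ℂ × ℕ)) : ℕ → Set (ℂ × ℕ) × Set (ℂ × ℕ) × Set (ℂ × ℕ)
  | 0 => (∅, ∅, ∅)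
  | k + 1 =>
      (extUnion E₀ (idxMinusI (idxSMul 2 (scriRec E₀ k).2.2)),
       idxZero ∪ extUnion E₀
         (idxSum (scriRec E₀ k).2.1 (scriRec E₀ k).1 ∪
           idxMinusI (idxSMul 2 (scriRec E₀ k).2.2)),
       extUnion idxZero (extUnion E₀
           (idxSum (scriRec E₀ k).2.2 (scriRec E₀ k).1 ∪ idxSMul 2 (scriRec E₀ k).2.1)) ∪
         ⋃ (j : ℕ) (_ : 1 ≤ j), idxPlusI (idxSMul j (idxMinusI (scriRec E₀ k).2.2)))

/-!
Measure index sets by the cones `{(-i m, j) : j ≤ 3 m + c}`: sums add the offsets `c`, the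
shift `- i` lowers `c` by `3` (and `+ i` raises it by `3` when `c < 0`), and the extended union
with `0` raises it by one. With the offsets `-1, 0, 1` for `E'_I, Ē_I, E_I` these rules make the
explicit triple stable under the recursion step, so it bounds every stage. Conversely the stages
increase, so their unions are closed under the operations of the step, and an induction on `m`
produces every point `(-i m, j)`, `j ≤ 3 m + 1`, of `E_I`; the points of `E'_I` and `Ē_I` then
come from `2 E_I - i`.
-/

open Complex

abbrev IdxTriple := Set (ℂ × ℕ) × Set (ℂ × ℕ) × Set (ℂ × ℕ)

lemma extUnion_mono {E₁ E₂ F₁ F₂ : Set (ℂ × ℕ)} (h₁ : E₁ ⊆ F₁) (h₂ : E₂ ⊆ F₂) :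
    extUnion E₁ E₂ ⊆ extUnion F₁ F₂ := by
  rintro p ((hp | hp) | ⟨j₁, j₂, hj₁, hj₂, hle⟩)
  · exact Or.inl (Or.inl (h₁ hp))
  · exact Or.inl (Or.inr (h₂ hp))
  · exact Or.inr ⟨j₁, j₂, h₁ hj₁, h₂ hj₂, hle⟩

lemma extUnion_empty_left (E : Set (ℂ × ℕ)) : extUnion ∅ E = E := by
  ext p
  simp [extUnion]

lemma subset_extUnion_left (E₁ E₂ : Set (ℂ × ℕ)) : E₁ ⊆ extUnion E₁ E₂ :=
  fun _ hp => Or.inl (Or.inl hp)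

lemma subset_extUnion_right (E₁ E₂ : Set (ℂ × ℕ)) : E₂ ⊆ extUnion E₁ E₂ :=
  fun _ hp => Or.inl (Or.inr hp)

lemma mem_extUnion_of_le {E₁ E₂ : Set (ℂ × ℕ)} {z : ℂ} {j j₁ j₂ : ℕ} (h₁ : (z, j₁) ∈ E₁)
    (h₂ : (z, j₂) ∈ E₂) (hj : j ≤ j₁ + j₂ + 1) : (z, j) ∈ extUnion E₁ E₂ :=
  Or.inr ⟨j₁, j₂, h₁, h₂, hj⟩

lemma idxSum_mono {E₁ E₂ F₁ F₂ : Set (ℂ × ℕ)} (h₁ : E₁ ⊆ F₁) (h₂ : E₂ ⊆ F₂) :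
    idxSum E₁ E₂ ⊆ idxSum F₁ F₂ := by
  rintro p ⟨z₁, j₁, z₂, j₂, hp₁, hp₂, rfl⟩
  exact ⟨z₁, j₁, z₂, j₂, h₁ hp₁, h₂ hp₂, rfl⟩

lemma add_mem_idxSum {E₁ E₂ : Set (ℂ × ℕ)} {z₁ z₂ : ℂ} {j₁ j₂ : ℕ} (h₁ : (z₁, j₁) ∈ E₁)
    (h₂ : (z₂, j₂) ∈ E₂) : (z₁ + z₂, j₁ + j₂) ∈ idxSum E₁ E₂ :=
  ⟨z₁, j₁, z₂, j₂, h₁, h₂, rfl⟩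

lemma idxSMul_mono {E F : Set (ℂ × ℕ)} (h : E ⊆ F) (n : ℕ) : idxSMul n E ⊆ idxSMul n F := by
  induction n with
  | zero => exact subset_rfl
  | succ n ih => exact idxSum_mono h ih

lemma idxSMul_one (E : Set (ℂ × ℕ)) : idxSMul 1 E = E := by
  ext ⟨z, j⟩
  simp [idxSMul, idxSum]

lemma add_mem_idxSMul_two {E : Set (ℂ × ℕ)} {z₁ z₂ : ℂ} {j₁ j₂ : ℕ} (h₁ : (z₁, j₁) ∈ E)
    (h₂ : (z₂, j₂) ∈ E) : (z₁ + z₂, j₁ + j₂) ∈ idxSMul 2 E := by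
  rw [idxSMul, idxSMul_one]
  exact add_mem_idxSum h₁ h₂

lemma idxMinusI_mono {E F : Set (ℂ × ℕ)} (h : E ⊆ F) : idxMinusI E ⊆ idxMinusI F :=
  Set.image_mono h

lemma idxPlusI_mono {E F : Set (ℂ × ℕ)} (h : E ⊆ F) : idxPlusI E ⊆ idxPlusI F :=
  Set.image_mono h

section Directed

variable {ι : Type*} [Preorder ι] [IsDirectedOrder ι] {A B : ι → Set (ℂ × ℕ)}

lemma idxSum_iUnion_subset (hA : Monotone A) (hB : Monotone B) :
    idxSum (⋃ i, A i) (⋃ i, B i) ⊆ ⋃ i, idxSum (A i) (B i) := by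
  rintro p ⟨z₁, j₁, z₂, j₂, hp₁, hp₂, rfl⟩
  obtain ⟨i₁, hi₁⟩ := Set.mem_iUnion.1 hp₁
  obtain ⟨i₂, hi₂⟩ := Set.mem_iUnion.1 hp₂
  obtain ⟨i, h₁i, h₂i⟩ := exists_ge_ge i₁ i₂
  exact Set.mem_iUnion.2 ⟨i, add_mem_idxSum (hA h₁i hi₁) (hB h₂i hi₂)⟩

lemma idxSMul_iUnion_subset [Nonempty ι] (hA : Monotone A) (n : ℕ) :
    idxSMul n (⋃ i, A i) ⊆ ⋃ i, idxSMul n (A i) := by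
  induction n with
  | zero => simp [idxSMul]
  | succ n ih =>
    exact (idxSum_mono subset_rfl ih).trans
      (idxSum_iUnion_subset hA fun _ _ h => idxSMul_mono (hA h) n)

lemma extUnion_iUnion_subset (hA : Monotone A) (hB : Monotone B) :
    extUnion (⋃ i, A i) (⋃ i, B i) ⊆ ⋃ i, extUnion (A i) (B i) := by
  rintro ⟨z, j⟩ ((hp | hp) | ⟨j₁, j₂, hp₁, hp₂, hle⟩)
  · obtain ⟨i, hi⟩ := Set.mem_iUnion.1 hp
    exact Set.mem_iUnion.2 ⟨i, subset_extUnion_left _ _ hi⟩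
  · obtain ⟨i, hi⟩ := Set.mem_iUnion.1 hp
    exact Set.mem_iUnion.2 ⟨i, subset_extUnion_right _ _ hi⟩
  · obtain ⟨i₁, hi₁⟩ := Set.mem_iUnion.1 hp₁
    obtain ⟨i₂, hi₂⟩ := Set.mem_iUnion.1 hp₂
    obtain ⟨i, h₁i, h₂i⟩ := exists_ge_ge i₁ i₂
    exact Set.mem_iUnion.2 ⟨i, mem_extUnion_of_le (hA h₁i hi₁) (hB h₂i hi₂) hle⟩

end Directed

section Recursion

variable {E₀ : Set (ℂ × ℕ)}

def scriStep (E₀ : Set (ℂ × ℕ)) (T : IdxTriple) : IdxTriple :=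
  (extUnion E₀ (idxMinusI (idxSMul 2 T.2.2)),
   idxZero ∪ extUnion E₀ (idxSum T.2.1 T.1 ∪ idxMinusI (idxSMul 2 T.2.2)),
   extUnion idxZero (extUnion E₀ (idxSum T.2.2 T.1 ∪ idxSMul 2 T.2.1)) ∪
     ⋃ (j : ℕ) (_ : 1 ≤ j), idxPlusI (idxSMul j (idxMinusI T.2.2)))

lemma scriRec_succ (E₀ : Set (ℂ × ℕ)) (k : ℕ) :
    scriRec E₀ (k + 1) = scriStep E₀ (scriRec E₀ k) :=
  rfl

lemma scriStep_mono (E₀ : Set (ℂ × ℕ)) : Monotone (scriStep E₀) := by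
  rintro ⟨P, B, C⟩ ⟨P', B', C'⟩ ⟨hP, hB, hC⟩
  have hMinus : idxMinusI (idxSMul 2 C) ⊆ idxMinusI (idxSMul 2 C') :=
    idxMinusI_mono (idxSMul_mono hC 2)
  refine ⟨extUnion_mono subset_rfl hMinus,
    Set.union_subset_union_right _ (extUnion_mono subset_rfl
      (Set.union_subset_union (idxSum_mono hB hP) hMinus)),
    Set.union_subset_union (extUnion_mono subset_rfl (extUnion_mono subset_rfl
      (Set.union_subset_union (idxSum_mono hC hP) (idxSMul_mono hB 2)))) ?_⟩
  exact Set.biUnion_mono subset_rfl fun j _ =>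
    idxPlusI_mono (idxSMul_mono (idxMinusI_mono hC) j)

lemma scriRec_mono (E₀ : Set (ℂ × ℕ)) : Monotone (scriRec E₀) := by
  refine monotone_nat_of_le_succ fun k => ?_
  induction k with
  | zero => exact bot_le
  | succ k ih =>
    rw [scriRec_succ, scriRec_succ E₀ (k + 1)]
    exact scriStep_mono E₀ ih

def scriUnion (E₀ : Set (ℂ × ℕ)) : IdxTriple :=
  (⋃ k, (scriRec E₀ k).1, ⋃ k, (scriRec E₀ k).2.1, ⋃ k, (scriRec E₀ k).2.2)

lemma idxSMul_two_scriUnion_subset :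
    idxSMul 2 (scriUnion E₀).2.2 ⊆ ⋃ k, idxSMul 2 (scriRec E₀ k).2.2 :=
  idxSMul_iUnion_subset (fun _ _ h => (scriRec_mono E₀ h).2.2) 2

lemma idxMinusI_two_scriUnion_subset_fst :
    idxMinusI (idxSMul 2 (scriUnion E₀).2.2) ⊆ (scriUnion E₀).1 := by
  refine (idxMinusI_mono idxSMul_two_scriUnion_subset).trans ?_
  rw [idxMinusI, Set.image_iUnion]
  exact Set.iUnion_mono' fun k => ⟨k + 1, subset_extUnion_right _ _⟩

lemma idxMinusI_two_scriUnion_subset_snd :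
    idxMinusI (idxSMul 2 (scriUnion E₀).2.2) ⊆ (scriUnion E₀).2.1 := by
  refine (idxMinusI_mono idxSMul_two_scriUnion_subset).trans ?_
  rw [idxMinusI, Set.image_iUnion]
  exact Set.iUnion_mono' fun k =>
    ⟨k + 1, fun _ hp => Or.inr (subset_extUnion_right _ _ (Or.inr hp))⟩

lemma idxZero_subset_scriUnion_snd : idxZero ⊆ (scriUnion E₀).2.1 :=
  fun _ hp => Set.mem_iUnion.2 ⟨1, Or.inl hp⟩

lemma extUnion_idxZero_scriUnion_subset :
    extUnion idxZero (idxSum (scriUnion E₀).2.2 (scriUnion E₀).1 ∪ idxSMul 2 (scriUnion E₀).2.1)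
      ⊆ (scriUnion E₀).2.2 := by
  have hP : Monotone fun k => (scriRec E₀ k).1 := fun _ _ h => (scriRec_mono E₀ h).1
  have hB : Monotone fun k => (scriRec E₀ k).2.1 := fun _ _ h => (scriRec_mono E₀ h).2.1
  have hC : Monotone fun k => (scriRec E₀ k).2.2 := fun _ _ h => (scriRec_mono E₀ h).2.2
  have hX : idxSum (scriUnion E₀).2.2 (scriUnion E₀).1 ∪ idxSMul 2 (scriUnion E₀).2.1 ⊆
      ⋃ k, (idxSum (scriRec E₀ k).2.2 (scriRec E₀ k).1 ∪ idxSMul 2 (scriRec E₀ k).2.1) := by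
    rw [Set.iUnion_union_distrib]
    exact Set.union_subset_union (idxSum_iUnion_subset hC hP) (idxSMul_iUnion_subset hB 2)
  have hX_mono : Monotone fun k =>
      idxSum (scriRec E₀ k).2.2 (scriRec E₀ k).1 ∪ idxSMul 2 (scriRec E₀ k).2.1 :=
    fun _ _ h => Set.union_subset_union (idxSum_mono (hC h) (hP h)) (idxSMul_mono (hB h) 2)
  calc _ ⊆ extUnion (⋃ _ : ℕ, idxZero) (⋃ k, (idxSum (scriRec E₀ k).2.2 (scriRec E₀ k).1 ∪
          idxSMul 2 (scriRec E₀ k).2.1)) := by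
        rw [Set.iUnion_const]
        exact extUnion_mono subset_rfl hX
    _ ⊆ _ := extUnion_iUnion_subset monotone_const hX_mono
    _ ⊆ _ := Set.iUnion_mono' fun k => ⟨k + 1, Set.subset_union_left.trans' <|
        extUnion_mono subset_rfl (subset_extUnion_right _ _)⟩

end Recursion

lemma neg_natCast_mul_I_add (m₁ m₂ : ℕ) :
    -(m₁ : ℂ) * I + -(m₂ : ℂ) * I = -((m₁ + m₂ : ℕ) : ℂ) * I := by
  push_cast
  ring

/-- The exponents of `ρ^m (log ρ)^j` with `j ≤ 3 m + c`. -/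
def idxCone (c : ℤ) : Set (ℂ × ℕ) :=
  {p | ∃ m : ℕ, (p.2 : ℤ) ≤ 3 * m + c ∧ p.1 = -(m : ℂ) * I}

lemma idxCone_mono {c d : ℤ} (h : c ≤ d) : idxCone c ⊆ idxCone d :=
  fun _ ⟨m, hj, hz⟩ => ⟨m, by omega, hz⟩

lemma idxZero_subset_idxCone_zero : idxZero ⊆ idxCone 0 := by
  rintro _ ⟨m, rfl⟩
  exact ⟨m, by simp, rfl⟩

lemma idxSum_idxCone_subset {a b c : ℤ} (h : a + b ≤ c) :
    idxSum (idxCone a) (idxCone b) ⊆ idxCone c := by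
  rintro _ ⟨z₁, j₁, z₂, j₂, ⟨m₁, hj₁, rfl⟩, ⟨m₂, hj₂, rfl⟩, rfl⟩
  refine ⟨m₁ + m₂, ?_, neg_natCast_mul_I_add m₁ m₂⟩
  push_cast at hj₁ hj₂ ⊢
  omega

lemma idxSMul_idxCone_subset (n : ℕ) (c : ℤ) : idxSMul n (idxCone c) ⊆ idxCone (n * c) := by
  induction n with
  | zero =>
    rintro _ rfl
    exact ⟨0, by simp, by simp⟩
  | succ n ih =>
    exact (idxSum_mono subset_rfl ih).trans (idxSum_idxCone_subset (by push_cast; linarith))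

lemma idxMinusI_idxCone_subset {c d : ℤ} (h : c ≤ d + 3) : idxMinusI (idxCone c) ⊆ idxCone d := by
  rintro _ ⟨⟨_, j⟩, ⟨m, hj, rfl⟩, rfl⟩
  refine ⟨m + 1, ?_, ?_⟩
  · push_cast at hj ⊢
    omega
  · push_cast
    ring

lemma idxPlusI_idxCone_subset {c d : ℤ} (hc : c < 0) (h : c + 3 ≤ d) :
    idxPlusI (idxCone c) ⊆ idxCone d := by
  rintro _ ⟨⟨_, j⟩, ⟨_ | m, hj, rfl⟩, rfl⟩
  · simp only [CharP.cast_eq_zero, mul_zero, zero_add] at hj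
    omega
  · refine ⟨m, ?_, ?_⟩
    · push_cast at hj ⊢
      omega
    · push_cast
      ring

lemma extUnion_idxZero_idxCone_subset {b : ℤ} (hb : 0 ≤ b + 1) :
    extUnion idxZero (idxCone b) ⊆ idxCone (b + 1) := by
  rintro p ((hp | hp) | ⟨j₁, j₂, ⟨n, hn⟩, ⟨m, hj₂, hz⟩, hle⟩)
  · exact idxCone_mono (by omega) (idxZero_subset_idxCone_zero hp)
  · exact idxCone_mono (by omega) hp
  · obtain rfl : j₁ = 0 := congrArg Prod.snd hn
    exact ⟨m, by push_cast at hj₂ hle ⊢; omega, hz⟩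

lemma idxCone_neg_one_eq :
    idxCone (-1) = {p : ℂ × ℕ | ∃ m : ℕ, 1 ≤ m ∧ p.2 ≤ 3 * m - 1 ∧ p.1 = -(m : ℂ) * I} := by
  ext p
  refine exists_congr fun m => ?_
  constructor
  · rintro ⟨hj, hz⟩
    exact ⟨by omega, by omega, hz⟩
  · rintro ⟨hm, hj, hz⟩
    exact ⟨by omega, hz⟩

lemma idxCone_one_eq :
    idxCone 1 = {p : ℂ × ℕ | ∃ m : ℕ, p.2 ≤ 3 * m + 1 ∧ p.1 = -(m : ℂ) * I} := by
  ext p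
  refine exists_congr fun m => and_congr_left' ?_
  omega

def schwartzScriIndices : IdxTriple :=
  (idxCone (-1), insert ((0 : ℂ), (0 : ℕ)) (idxCone (-1)), idxCone 1)

lemma scriStep_empty_schwartzScriIndices_le :
    scriStep ∅ schwartzScriIndices ≤ schwartzScriIndices := by
  have hZero : idxZero ⊆ insert ((0 : ℂ), (0 : ℕ)) (idxCone (-1)) := by
    rintro _ ⟨_ | m, rfl⟩
    · exact Or.inl (by simp)
    · exact Or.inr ⟨m + 1, by push_cast; omega, rfl⟩
  have hBar : insert ((0 : ℂ), (0 : ℕ)) (idxCone (-1)) ⊆ idxCone 0 :=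
    Set.insert_subset ⟨0, by simp, by simp⟩ (idxCone_mono (by norm_num))
  have hPrime : idxMinusI (idxSMul 2 (idxCone 1)) ⊆ idxCone (-1) :=
    (idxMinusI_mono (idxSMul_idxCone_subset 2 1)).trans (idxMinusI_idxCone_subset (by norm_num))
  have hBarSum : idxSum (insert ((0 : ℂ), (0 : ℕ)) (idxCone (-1))) (idxCone (-1)) ⊆ idxCone (-1) :=
    (idxSum_mono hBar subset_rfl).trans (idxSum_idxCone_subset (by norm_num))
  have hSum : idxSum (idxCone 1) (idxCone (-1)) ∪ idxSMul 2 (insert (0, 0) (idxCone (-1))) ⊆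
      idxCone 0 :=
    Set.union_subset (idxSum_idxCone_subset (by norm_num))
      ((idxSMul_mono hBar 2).trans ((idxSMul_idxCone_subset 2 0).trans (idxCone_mono (by simp))))
  have hShift : ∀ j, 1 ≤ j → idxPlusI (idxSMul j (idxMinusI (idxCone 1))) ⊆ idxCone 1 := by
    intro j hj
    have hMinus : idxMinusI (idxCone 1) ⊆ idxCone (-2) := idxMinusI_idxCone_subset (by norm_num)
    refine (idxPlusI_mono ((idxSMul_mono hMinus j).trans (idxSMul_idxCone_subset j (-2)))).trans ?_
    exact idxPlusI_idxCone_subset (by omega) (by omega)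
  simp only [scriStep, schwartzScriIndices, extUnion_empty_left]
  refine ⟨hPrime, ?_, ?_⟩
  · exact Set.union_subset hZero (Set.union_subset (hBarSum.trans (Set.subset_insert _ _))
      (hPrime.trans (Set.subset_insert _ _)))
  · exact Set.union_subset
      ((extUnion_mono subset_rfl hSum).trans (extUnion_idxZero_idxCone_subset (by norm_num)))
      (Set.iUnion₂_subset hShift)

lemma scriRec_empty_le_schwartzScriIndices (k : ℕ) : scriRec ∅ k ≤ schwartzScriIndices := by
  induction k with
  | zero => exact bot_le
  | succ k ih =>
    rw [scriRec_succ]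
    exact (scriStep_mono ∅ ih).trans scriStep_empty_schwartzScriIndices_le

section LowerBound

variable {E₀ : Set (ℂ × ℕ)}

lemma mem_idxSum_of_neg_natCast_mul_I {E₁ E₂ : Set (ℂ × ℕ)} {m₁ m₂ j₁ j₂ : ℕ}
    (h₁ : (-(m₁ : ℂ) * I, j₁) ∈ E₁) (h₂ : (-(m₂ : ℂ) * I, j₂) ∈ E₂) :
    (-((m₁ + m₂ : ℕ) : ℂ) * I, j₁ + j₂) ∈ idxSum E₁ E₂ := by
  rw [← neg_natCast_mul_I_add]
  exact add_mem_idxSum h₁ h₂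

lemma mem_idxMinusI_idxSMul_two_of_neg_natCast_mul_I {E : Set (ℂ × ℕ)} {m₁ m₂ j₁ j₂ : ℕ}
    (h₁ : (-(m₁ : ℂ) * I, j₁) ∈ E) (h₂ : (-(m₂ : ℂ) * I, j₂) ∈ E) :
    (-((m₁ + m₂ + 1 : ℕ) : ℂ) * I, j₁ + j₂) ∈ idxMinusI (idxSMul 2 E) := by
  refine ⟨_, add_mem_idxSMul_two h₁ h₂, ?_⟩
  simp only [Prod.mk.injEq, and_true]
  push_cast
  ring

lemma mem_scriUnion_thd_of_le_one (m : ℕ) {j : ℕ} (hj : j ≤ 1) :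
    (-(m : ℂ) * I, j) ∈ (scriUnion E₀).2.2 := by
  have hBar : (-(m : ℂ) * I + -((0 : ℕ) : ℂ) * I, 0 + 0) ∈ idxSMul 2 (scriUnion E₀).2.1 :=
    add_mem_idxSMul_two (idxZero_subset_scriUnion_snd ⟨m, rfl⟩)
      (idxZero_subset_scriUnion_snd ⟨0, rfl⟩)
  simp only [CharP.cast_eq_zero, neg_zero, zero_mul, add_zero] at hBar
  exact extUnion_idxZero_scriUnion_subset
    (mem_extUnion_of_le ⟨m, rfl⟩ (Or.inr hBar) (by omega))

lemma mem_scriUnion_fst_neg_I {b : ℕ} (hb : b ≤ 2) :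
    (-((1 : ℕ) : ℂ) * I, b) ∈ (scriUnion E₀).1 :=
  idxMinusI_two_scriUnion_subset_fst <| by
    simpa using mem_idxMinusI_idxSMul_two_of_neg_natCast_mul_I
      (mem_scriUnion_thd_of_le_one (E₀ := E₀) 0 (min_le_right b 1))
      (mem_scriUnion_thd_of_le_one (E₀ := E₀) 0 (by omega : b - min b 1 ≤ 1))

/-- The point `(-i (m+1), j)`, `2 ≤ j`, comes from `(-i m, a) + (-i, b)` with `a + b = j - 1`
and `b ≤ 2`, and the `+ 1` of the extended union with `0`. -/
lemma idxCone_one_subset_scriUnion_thd : idxCone 1 ⊆ (scriUnion E₀).2.2 := by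
  rintro ⟨_, j⟩ ⟨m, hj, rfl⟩
  induction m generalizing j with
  | zero => exact mem_scriUnion_thd_of_le_one 0 (by push_cast at hj; omega)
  | succ m ih =>
    rcases le_or_gt j 1 with hj₁ | hj₁
    · exact mem_scriUnion_thd_of_le_one _ hj₁
    set a := min (j - 1) (3 * m + 1)
    have hPrev : (-(m : ℂ) * I, a) ∈ (scriUnion E₀).2.2 := ih a (by push_cast; omega)
    have hSum := mem_idxSum_of_neg_natCast_mul_I hPrev
      (mem_scriUnion_fst_neg_I (E₀ := E₀) (b := j - 1 - a) (by push_cast at hj; omega))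
    exact extUnion_idxZero_scriUnion_subset
      (mem_extUnion_of_le ⟨m + 1, rfl⟩ (Or.inl hSum) (by omega))

lemma idxCone_neg_one_subset_idxMinusI_idxSMul_two :
    idxCone (-1) ⊆ idxMinusI (idxSMul 2 (idxCone 1)) := by
  rintro ⟨_, j⟩ ⟨_ | m, hj, rfl⟩
  · push_cast at hj
    omega
  · have h₁ : (-(m : ℂ) * I, min j (3 * m + 1)) ∈ idxCone 1 := ⟨m, by simp, rfl⟩
    have h₂ : (-((0 : ℕ) : ℂ) * I, j - min j (3 * m + 1)) ∈ idxCone 1 :=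
      ⟨0, by push_cast at hj ⊢; omega, rfl⟩
    have h := mem_idxMinusI_idxSMul_two_of_neg_natCast_mul_I h₁ h₂
    rwa [add_zero, Nat.add_sub_of_le (min_le_left _ _)] at h

lemma schwartzScriIndices_le_scriUnion (E₀ : Set (ℂ × ℕ)) :
    schwartzScriIndices ≤ scriUnion E₀ := by
  have hPrime : idxCone (-1) ⊆ idxMinusI (idxSMul 2 (scriUnion E₀).2.2) :=
    idxCone_neg_one_subset_idxMinusI_idxSMul_two.trans
      (idxMinusI_mono (idxSMul_mono idxCone_one_subset_scriUnion_thd 2))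
  exact ⟨hPrime.trans idxMinusI_two_scriUnion_subset_fst,
    Set.insert_subset (idxZero_subset_scriUnion_snd ⟨0, by simp⟩)
      (hPrime.trans idxMinusI_two_scriUnion_subset_snd),
    idxCone_one_subset_scriUnion_thd⟩

end LowerBound

lemma scriUnion_empty : scriUnion ∅ = schwartzScriIndices :=
  le_antisymm
    (Prod.mk_le_mk.2 ⟨Set.iUnion_subset fun k => (scriRec_empty_le_schwartzScriIndices k).1,
      Set.iUnion_subset fun k => (scriRec_empty_le_schwartzScriIndices k).2.1,
      Set.iUnion_subset fun k => (scriRec_empty_le_schwartzScriIndices k).2.2⟩)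
    (schwartzScriIndices_le_scriUnion ∅)

/-- For `E₀ = ∅` (Schwartz perturbations of Schwarzschild data), the index sets at null
infinity are explicitly: `E'_I = {(-i m, j) : m ≥ 1, j ≤ 3m-1}`, `Ē_I = {(0,0)} ∪ E'_I`, and
`E_I = {(-i m, j) : m ≥ 0, j ≤ 3m+1}`. -/
theorem scri_index_sets_schwartz_data :
    (⋃ k, (scriRec ∅ k).1) =
      {p : ℂ × ℕ | ∃ m : ℕ, 1 ≤ m ∧ p.2 ≤ 3 * m - 1 ∧ p.1 = -(m : ℂ) * Complex.I} ∧
    (⋃ k, (scriRec ∅ k).2.1) =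
      insert ((0 : ℂ), (0 : ℕ))
        {p : ℂ × ℕ | ∃ m : ℕ, 1 ≤ m ∧ p.2 ≤ 3 * m - 1 ∧ p.1 = -(m : ℂ) * Complex.I} ∧
    (⋃ k, (scriRec ∅ k).2.2) =
      {p : ℂ × ℕ | ∃ m : ℕ, p.2 ≤ 3 * m + 1 ∧ p.1 = -(m : ℂ) * Complex.I} := by
  have h := scriUnion_empty
  rw [schwartzScriIndices, idxCone_neg_one_eq, idxCone_one_eq] at h
  simpa only [scriUnion, Prod.mk.injEq] using h
end
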